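/- arXiv:2503.09664 — 2 statements merged into one kernel-verified Lean document; each statement's English description precedes it below -/
import Mathlib

section
/- Fix a real number q > 1. For every integer n ≥ 0 and every integer α ≥ 1, there exists a finitely supported c : ℕ × ℕ → ℝ with c(a,b) = 0 unless a ≥ 1 or (a,b) = (0,0), whose constant coefficient is c(0,0) = ∏_{i=0}^{n−1} (1 − q^{α+i})^{−1}, and such that vol_{n,α}(x) = Σ_{(a,b)} c(a,b) · q^{a·x} · x^{b} for all integers x ≥ 1. -/
open Finset

noncomputable section

/-- `μ_m := ∏_{i=1}^{m} (1 − q⁻¹)/(1 − q^{-i})`. -/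
def mu (q : ℝ) (m : ℕ) : ℝ :=
  ∏ i ∈ Finset.range m, (1 - q⁻¹) / (1 - q ^ (-((i : ℤ) + 1)))

/-- For a weakly increasing tuple `λ`, the product `∏_j μ_{n_j}` over the lengths
`(n_1, …, n_s)` of the maximal constant segments of `λ` (equivalently, over the
cardinalities of the fibers of `λ`). -/
def typeProd (q : ℝ) {n : ℕ} (l : Fin n → ℤ) : ℝ :=
  ∏ v ∈ Finset.image l Finset.univ, mu q ((Finset.univ.filter fun i => l i = v).card)

/-- The weight `w_n(λ) := ((∏_j μ_{n_j})/μ_n) · ∏_{i<j} q^{λ_j − λ_i}`. -/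
def weight (q : ℝ) {n : ℕ} (l : Fin n → ℤ) : ℝ :=
  (typeProd q l / mu q n) *
    ∏ p ∈ Finset.univ.filter (fun p : Fin n × Fin n => p.1 < p.2), q ^ (l p.2 - l p.1)

open scoped Classical in
/-- The weakly increasing integer tuples `0 ≤ λ_1 ≤ ⋯ ≤ λ_n ≤ x`. -/
def tuples (n x : ℕ) : Finset (Fin n → ℤ) :=
  (Fintype.piFinset fun _ : Fin n => Finset.Icc (0 : ℤ) (x : ℤ)).filter Monotone

/-- `vol_{n,α}(x) := Σ_{0 ≤ λ_1 ≤ ⋯ ≤ λ_n ≤ x} q^{α(λ_1+⋯+λ_n)} · w_n(λ)`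
(for `n = 0` this is `1` by convention, the sum being over the single empty tuple). -/
def vol (q : ℝ) (n : ℕ) (α : ℤ) (x : ℕ) : ℝ :=
  ∑ l ∈ tuples n x, q ^ (α * ∑ i, l i) * weight q l

/-- The Gaussian binomial coefficient `∏_{i=1}^{β} (q^{n−β+i} − 1)/(q^{i} − 1)`. -/
def gaussBinom (q : ℝ) (n β : ℕ) : ℝ :=
  ∏ i ∈ Finset.range β, (q ^ (n - β + i + 1) - 1) / (q ^ (i + 1) - 1)

/-- Evaluation of a finitely supported family of coefficients `c : ℕ × ℕ → ℝ` as the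
`q`-quasi-polynomial `x ↦ Σ_{(a,b)} c(a,b) · q^{a·x} · x^{b}`. -/
def qQuasiEval (q : ℝ) (c : (ℕ × ℕ) →₀ ℝ) (x : ℕ) : ℝ :=
  c.sum fun p r => r * q ^ (p.1 * x) * (x : ℝ) ^ p.2

end

/-!
Sorting the tuples by their number `k` of zero entries, deleting the zeros and lowering the
remaining entries by one gives the recursion
`vol_{n,α}(x+1) = Σ_k [n,k]_q q^{α(n-k)} vol_{n-k,α+k}(x)`.
Its `k = 0` term is `q^{αn} vol_{n,α}(x)`, so by induction on `n` the function `vol_{n,α}` solves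
`f(x+1) = q^{αn} f(x) + g(x)`, where `g` is a constant plus a combination of `q^{ax} x^b` with
`a ≥ 1`. Because `αn ≥ 1`, the operator `f ↦ f(· + 1) - q^{αn} f` maps the span of these
monomials onto itself (with a resonance at `a = αn` handled by raising `b`), and its kernel
`C q^{αn x}` lies in that span; hence `vol_{n,α}` is again of this form, with constant term
`(constant term of g) / (1 - q^{αn})`. With `t = q^α`, the constant terms are then identified with
`1 / (t;q)_n` by the `q`-binomial identity `Σ_k [n,k]_q t^{n-k} (t;q)_k = 1`.
-/

section

variable {q : ℝ}

lemma pow_succ_sub_one_ne_zero (hq : 1 < q) (i : ℕ) : q ^ (i + 1) - 1 ≠ 0 :=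
  sub_ne_zero.mpr (one_lt_pow₀ hq i.succ_ne_zero).ne'

def qPochhammer (q t : ℝ) (n : ℕ) : ℝ := ∏ i ∈ range n, (1 - t * q ^ i)

lemma qPochhammer_zero (t : ℝ) : qPochhammer q t 0 = 1 := prod_range_zero _

lemma qPochhammer_succ (t : ℝ) (n : ℕ) :
    qPochhammer q t (n + 1) = qPochhammer q t n * (1 - t * q ^ n) :=
  prod_range_succ _ _

lemma qPochhammer_mul_qPochhammer (t : ℝ) (k m : ℕ) :
    qPochhammer q t k * qPochhammer q (t * q ^ k) m = qPochhammer q t (k + m) := by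
  simp only [qPochhammer, prod_range_add, pow_add, mul_assoc]

lemma gaussBinom_zero_right (n : ℕ) : gaussBinom q n 0 = 1 := prod_range_zero _

lemma gaussBinom_self (hq : 1 < q) (n : ℕ) : gaussBinom q n n = 1 := by
  refine prod_eq_one fun i _ => ?_
  rw [Nat.sub_self, zero_add]
  exact div_self (pow_succ_sub_one_ne_zero hq i)

lemma gaussBinom_succ_succ (hq : 1 < q) {n k : ℕ} (hk : k < n) :
    gaussBinom q (n + 1) (k + 1) = q ^ (k + 1) * gaussBinom q n (k + 1) + gaussBinom q n k := by
  obtain ⟨m, rfl⟩ : ∃ m, n = k + 1 + m := ⟨n - (k + 1), by omega⟩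
  have hD : ∏ i ∈ range k, (q ^ (i + 1) - 1) ≠ 0 :=
    prod_ne_zero_iff.mpr fun i _ => pow_succ_sub_one_ne_zero hq i
  have hk1 := pow_succ_sub_one_ne_zero hq k
  have e₁ : k + 1 + m + 1 - (k + 1) = m + 1 := by omega
  have e₂ : k + 1 + m - (k + 1) = m := by omega
  have e₃ : k + 1 + m - k = m + 1 := by omega
  have e₄ : ∀ i, m + (i + 1) + 1 = m + 1 + i + 1 := fun i => by omega
  simp only [gaussBinom, e₁, e₂, e₃, prod_div_distrib]
  rw [prod_range_succ (fun i => q ^ (m + 1 + i + 1) - 1),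
    prod_range_succ' (fun i => q ^ (m + i + 1) - 1), prod_range_succ (fun i => q ^ (i + 1) - 1)]
  simp only [e₄]
  field_simp
  ring

lemma sum_gaussBinom_mul_qPochhammer (hq : 1 < q) (t : ℝ) (n : ℕ) :
    ∑ k ∈ range (n + 1), gaussBinom q n k * t ^ (n - k) * qPochhammer q t k = 1 := by
  induction n with
  | zero => simp [gaussBinom_zero_right, qPochhammer_zero]
  | succ n ih =>
  -- Pascal's rule splits the sum as `A + B`, and `A + B` collapses termwise to the sum for `n`
  set A := ∑ k ∈ range (n + 1), q ^ k * gaussBinom q n k * t ^ (n + 1 - k) * qPochhammer q t k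
  set B := ∑ k ∈ range (n + 1), gaussBinom q n k * t ^ (n - k) * qPochhammer q t (k + 1)
  have hAB : A + B = 1 := by
    rw [← ih, ← sum_add_distrib]
    refine sum_congr rfl fun k hk => ?_
    rw [qPochhammer_succ, show n + 1 - k = n - k + 1 by grind, pow_succ]
    ring
  have hA : A = ∑ k ∈ range n,
      q ^ (k + 1) * gaussBinom q n (k + 1) * t ^ (n - k) * qPochhammer q t (k + 1)
        + t ^ (n + 1) := by
    simp only [A, sum_range_succ', gaussBinom_zero_right, qPochhammer_zero, Nat.add_sub_add_right,
      Nat.sub_zero, pow_zero, one_mul, mul_one]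
  have hB : B = ∑ k ∈ range n, gaussBinom q n k * t ^ (n - k) * qPochhammer q t (k + 1)
      + qPochhammer q t (n + 1) := by
    simp only [B, sum_range_succ, gaussBinom_self hq, Nat.sub_self]
    ring
  rw [← hAB, hA, hB, sum_range_succ', sum_range_succ, gaussBinom_self hq,
    gaussBinom_zero_right]
  have pascal : ∀ k ∈ range n,
      gaussBinom q (n + 1) (k + 1) * t ^ (n + 1 - (k + 1)) * qPochhammer q t (k + 1) =
        q ^ (k + 1) * gaussBinom q n (k + 1) * t ^ (n - k) * qPochhammer q t (k + 1)
          + gaussBinom q n k * t ^ (n - k) * qPochhammer q t (k + 1) := fun k hk => by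
    rw [gaussBinom_succ_succ hq (mem_range.mp hk), Nat.add_sub_add_right]
    ring
  rw [sum_congr rfl pascal, sum_add_distrib, Nat.sub_self, Nat.sub_zero, qPochhammer_zero]
  ring

lemma sum_gaussBinom_mul_inv_qPochhammer (hq : 1 < q) {t : ℝ} {n : ℕ}
    (ht : qPochhammer q t n ≠ 0) :
    ∑ k ∈ range n, gaussBinom q n (k + 1) * t ^ (n - (k + 1))
        * (qPochhammer q (t * q ^ (k + 1)) (n - (k + 1)))⁻¹
      = (1 - t ^ n) * (qPochhammer q t n)⁻¹ := by
  have key := sum_gaussBinom_mul_qPochhammer hq t n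
  rw [sum_range_succ', gaussBinom_zero_right, qPochhammer_zero, Nat.sub_zero, one_mul, mul_one]
    at key
  rw [← key, add_sub_cancel_right, sum_mul]
  refine sum_congr rfl fun k hk => ?_
  have hsplit := qPochhammer_mul_qPochhammer (q := q) t (k + 1) (n - (k + 1))
  rw [Nat.add_sub_cancel' (mem_range.mp hk)] at hsplit
  rw [← hsplit] at ht ⊢
  field_simp [left_ne_zero_of_mul ht, right_ne_zero_of_mul ht]

lemma qPochhammer_ne_zero (hq : 1 < q) {t : ℝ} (ht : 1 < t) (n : ℕ) : qPochhammer q t n ≠ 0 :=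
  prod_ne_zero_iff.mpr fun _ _ =>
    sub_ne_zero.mpr (one_lt_mul_of_lt_of_le ht (one_le_pow₀ hq.le)).ne

lemma mu_zero : mu q 0 = 1 := prod_range_zero _

lemma mu_factor_eq (hq : 1 < q) (i : ℕ) :
    (1 - q⁻¹) / (1 - q ^ (-((i : ℤ) + 1))) = (q - 1) * q ^ i / (q ^ (i + 1) - 1) := by
  have hq₀ : q ≠ 0 := by positivity
  have hi := pow_succ_sub_one_ne_zero hq i
  rw [show -((i : ℤ) + 1) = -((i + 1 : ℕ) : ℤ) by push_cast; ring, zpow_neg, zpow_natCast]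
  field_simp
  ring

lemma mu_eq_prod (hq : 1 < q) (n : ℕ) :
    mu q n = ∏ i ∈ range n, (q - 1) * q ^ i / (q ^ (i + 1) - 1) :=
  prod_congr rfl fun i _ => mu_factor_eq hq i

lemma mu_factor_ne_zero (hq : 1 < q) (i : ℕ) : (q - 1) * q ^ i / (q ^ (i + 1) - 1) ≠ 0 :=
  div_ne_zero (mul_ne_zero (sub_ne_zero.mpr hq.ne') (by positivity)) (pow_succ_sub_one_ne_zero hq i)

lemma mu_ne_zero (hq : 1 < q) (m : ℕ) : mu q m ≠ 0 := by
  rw [mu_eq_prod hq]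
  exact prod_ne_zero_iff.mpr fun i _ => mu_factor_ne_zero hq i

lemma mu_mul_mu_div_mu (hq : 1 < q) (k m : ℕ) :
    mu q k * mu q m / mu q (k + m) * q ^ (k * m) = gaussBinom q (k + m) k := by
  rw [mu_eq_prod hq, mu_eq_prod hq, mu_eq_prod hq, add_comm k m, prod_range_add, mul_comm k m,
    pow_mul, gaussBinom, Nat.add_sub_cancel]
  set f : ℕ → ℝ := fun i => (q - 1) * q ^ i / (q ^ (i + 1) - 1)
  have hf : ∀ i, f i ≠ 0 := mu_factor_ne_zero hq
  have hfm : ∏ i ∈ range m, f i ≠ 0 := prod_ne_zero_iff.mpr fun i _ => hf i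
  have hfk : ∏ i ∈ range k, f (m + i) ≠ 0 := prod_ne_zero_iff.mpr fun i _ => hf _
  calc (∏ i ∈ range k, f i) * (∏ i ∈ range m, f i)
          / ((∏ i ∈ range m, f i) * ∏ i ∈ range k, f (m + i)) * (q ^ m) ^ k
        = (∏ i ∈ range k, f i) * (q ^ m) ^ k / ∏ i ∈ range k, f (m + i) := by
          field_simp
    _ = ∏ i ∈ range k, f i * q ^ m / f (m + i) := by
          rw [prod_div_distrib (f := fun i => f i * q ^ m), prod_mul_distrib,
            prod_const, card_range]
    _ = ∏ i ∈ range k, (q ^ (m + i + 1) - 1) / (q ^ (i + 1) - 1) := by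
          refine prod_congr rfl fun i _ => ?_
          have hi := pow_succ_sub_one_ne_zero hq i
          have hmi := pow_succ_sub_one_ne_zero hq (m + i)
          have hq₁ : q - 1 ≠ 0 := sub_ne_zero.mpr hq.ne'
          simp only [f]
          field_simp
          ring

lemma prod_zpow_eq_zpow_sum {G₀ ι : Type*} [CommGroupWithZero G₀] {a : G₀} (ha : a ≠ 0)
    (s : Finset ι) (f : ι → ℤ) : ∏ i ∈ s, a ^ f i = a ^ (∑ i ∈ s, f i) := by
  classical
  induction s using Finset.induction_on with
  | empty => simp
  | insert i s hi ih => rw [sum_insert hi, prod_insert hi, zpow_add₀ ha, ih]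

lemma sum_pairs_lt_sub {n : ℕ} (l : Fin n → ℤ) :
    ∑ p ∈ univ.filter (fun p : Fin n × Fin n => p.1 < p.2), (l p.2 - l p.1)
      = ∑ i : Fin n, (2 * ((i : ℕ) : ℤ) + 1 - n) * l i := by
  have hright : ∑ p ∈ univ.filter (fun p : Fin n × Fin n => p.1 < p.2), l p.2
      = ∑ j : Fin n, ((j : ℕ) : ℤ) * l j := by
    rw [sum_filter, Fintype.sum_prod_type_right]
    refine sum_congr rfl fun j _ => ?_
    dsimp only
    rw [← sum_filter, filter_gt_eq_Iio, sum_const, Fin.card_Iio, nsmul_eq_mul]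
  have hleft : ∑ p ∈ univ.filter (fun p : Fin n × Fin n => p.1 < p.2), l p.1
      = ∑ i : Fin n, ((n : ℤ) - 1 - (i : ℕ)) * l i := by
    rw [sum_filter, Fintype.sum_prod_type]
    refine sum_congr rfl fun i _ => ?_
    dsimp only
    rw [← sum_filter, filter_lt_eq_Ioi, sum_const, Fin.card_Ioi, nsmul_eq_mul,
      Nat.sub_sub, Nat.cast_sub (by omega : 1 + (i : ℕ) ≤ n)]
    push_cast
    ring
  rw [sum_sub_distrib, hleft, hright, ← sum_sub_distrib]
  exact sum_congr rfl fun i _ => by ring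

lemma weight_eq (hq : q ≠ 0) {n : ℕ} (l : Fin n → ℤ) :
    weight q l
      = typeProd q l / mu q n * q ^ (∑ i : Fin n, (2 * ((i : ℕ) : ℤ) + 1 - n) * l i) := by
  rw [weight, ← sum_pairs_lt_sub, prod_zpow_eq_zpow_sum hq]

lemma sum_two_mul_add_one_sub (m : ℕ) : ∑ j : Fin m, (2 * ((j : ℕ) : ℤ) + 1 - m) = 0 := by
  rw [Fin.sum_univ_eq_sum_range (fun j => 2 * (j : ℤ) + 1 - m), sum_sub_distrib,
    sum_const, card_range, nsmul_eq_mul, sub_eq_zero]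
  induction m with
  | zero => simp
  | succ m ih => rw [sum_range_succ, ih]; push_cast; ring

lemma typeProd_eq_prod_of_subset {n : ℕ} {l : Fin n → ℤ} {S : Finset ℤ}
    (hS : image l univ ⊆ S) :
    typeProd q l = ∏ v ∈ S, mu q (univ.filter fun i => l i = v).card := by
  refine prod_subset hS fun v _ hv => ?_
  rw [card_eq_zero.mpr, mu_zero]
  exact filter_false_of_mem fun i _ hi => hv (mem_image.mpr ⟨i, mem_univ _, hi⟩)

lemma card_fiber_append {α : Type*} [DecidableEq α] {k m : ℕ} (u : Fin k → α)
    (w : Fin m → α) (v : α) :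
    (univ.filter fun i => Fin.append u w i = v).card
      = (univ.filter fun i => u i = v).card + (univ.filter fun j => w j = v).card := by
  simp only [card_filter, Fin.sum_univ_add, Fin.append_left, Fin.append_right]

lemma mem_tuples {n x : ℕ} {l : Fin n → ℤ} :
    l ∈ tuples n x ↔ (∀ i, 0 ≤ l i ∧ l i ≤ x) ∧ Monotone l := by
  simp [tuples, Fintype.mem_piFinset]

lemma eq_zero_iff_lt_of_card {n k : ℕ} {l : Fin n → ℤ} (hl : Monotone l)
    (h₀ : ∀ i, 0 ≤ l i) (hk : (univ.filter fun i => l i = 0).card = k) (i : Fin n) :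
    l i = 0 ↔ (i : ℕ) < k := by
  constructor
  · intro hi
    have : Iic i ⊆ univ.filter fun j => l j = 0 := fun j hj => by
      simpa using le_antisymm (hi ▸ hl (mem_Iic.mp hj)) (h₀ j)
    have := card_le_card this
    rw [Fin.card_Iic, hk] at this
    omega
  · intro hik
    by_contra hi
    have : (univ.filter fun j => l j = 0) ⊆ Iio i := fun j hj => by
      simp only [mem_filter, mem_univ, true_and] at hj
      exact mem_Iio.mpr (lt_of_not_ge fun hij => hi (le_antisymm (hj ▸ hl hij) (h₀ i)))
    have := card_le_card this
    rw [Fin.card_Iio, hk] at this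
    omega

def prependZeros (k : ℕ) {m : ℕ} (l : Fin m → ℤ) : Fin (k + m) → ℤ :=
  Fin.append (fun _ : Fin k => 0) (fun j => l j + 1)

section prependZeros

variable {k m x : ℕ} {l : Fin m → ℤ}

@[simp] lemma prependZeros_castAdd (i : Fin k) : prependZeros k l (Fin.castAdd m i) = 0 :=
  Fin.append_left _ _ i

@[simp] lemma prependZeros_natAdd (j : Fin m) : prependZeros k l (Fin.natAdd k j) = l j + 1 :=
  Fin.append_right _ _ j

lemma sum_prependZeros : ∑ i, prependZeros k l i = ∑ j, l j + m := by
  simp [Fin.sum_univ_add, sum_add_distrib]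

lemma sum_mul_prependZeros :
    ∑ i : Fin (k + m), (2 * ((i : ℕ) : ℤ) + 1 - ((k + m : ℕ) : ℤ)) * prependZeros k l i
      = ∑ j : Fin m, (2 * ((j : ℕ) : ℤ) + 1 - m) * l j + k * ∑ j, l j + k * m := by
  have hcenter := sum_two_mul_add_one_sub m
  simp only [Fin.sum_univ_add, prependZeros_castAdd, mul_zero, sum_const_zero, zero_add,
    prependZeros_natAdd, Fin.val_natAdd]
  have hterm : ∀ j : Fin m, (2 * ((k + j : ℕ) : ℤ) + 1 - ((k + m : ℕ) : ℤ)) * (l j + 1)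
      = ((2 * ((j : ℕ) : ℤ) + 1 - m) * l j + k * l j) + ((2 * ((j : ℕ) : ℤ) + 1 - m) + k) :=
        fun j => by
    push_cast
    ring
  rw [sum_congr rfl fun j _ => hterm j, sum_add_distrib, sum_add_distrib,
    sum_add_distrib, hcenter, mul_sum, sum_const, card_univ, Fintype.card_fin,
    nsmul_eq_mul]
  ring

lemma card_prependZeros_eq_zero (h₀ : ∀ j, 0 ≤ l j) :
    (univ.filter fun i => prependZeros k l i = 0).card = k := by
  have hpos : ∀ j, l j + 1 ≠ 0 := fun j => by linarith [h₀ j]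
  unfold prependZeros
  rw [card_fiber_append]
  simp [hpos]

lemma card_prependZeros_eq_add_one {v : ℤ} (hv : 0 ≤ v) :
    (univ.filter fun i => prependZeros k l i = v + 1).card
      = (univ.filter fun j => l j = v).card := by
  unfold prependZeros
  rw [card_fiber_append]
  simp [show (0 : ℤ) ≠ v + 1 by omega]

lemma typeProd_prependZeros (h₀ : ∀ j, 0 ≤ l j) :
    typeProd q (prependZeros k l) = mu q k * typeProd q l := by
  have h0 : (0 : ℤ) ∉ (image l univ).image (· + 1) := by
    simp only [mem_image, mem_univ, true_and, not_exists, not_and]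
    rintro _ ⟨j, rfl⟩ h
    linarith [h₀ j]
  rw [typeProd_eq_prod_of_subset (S := insert 0 ((image l univ).image (· + 1))),
    prod_insert h0, prod_image fun _ _ _ _ => add_right_cancel, typeProd,
    card_prependZeros_eq_zero h₀]
  · refine congrArg _ (prod_congr rfl fun v hv => ?_)
    obtain ⟨j, -, rfl⟩ := mem_image.mp hv
    rw [card_prependZeros_eq_add_one (h₀ j)]
  · intro v hv
    obtain ⟨i, -, rfl⟩ := mem_image.mp hv
    refine Fin.addCases (fun i => ?_) (fun j => ?_) i
    · simp
    · simp [mem_image]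

lemma prependZeros_mem_tuples (hl : l ∈ tuples m x) :
    prependZeros k l ∈ tuples (k + m) (x + 1) := by
  obtain ⟨hbd, hmono⟩ := mem_tuples.mp hl
  refine mem_tuples.mpr ⟨fun i => ?_, fun a b hab => ?_⟩
  · induction i using Fin.addCases with
    | left i => simp; positivity
    | right j =>
      simp only [prependZeros_natAdd]
      push_cast
      constructor <;> linarith [hbd j]
  · induction a using Fin.addCases with
    | left a =>
      induction b using Fin.addCases with
      | left b => simp
      | right b => simp only [prependZeros_castAdd, prependZeros_natAdd]; linarith [(hbd b).1]
    | right a =>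
      induction b using Fin.addCases with
      | left b => exact absurd hab (by simp [Fin.le_def]; omega)
      | right b =>
        simp only [prependZeros_natAdd, add_le_add_iff_right]
        exact hmono ((Fin.natAdd_le_natAdd_iff k).mp hab)

def dropZeros (k : ℕ) (l : Fin (k + m) → ℤ) : Fin m → ℤ := fun j => l (Fin.natAdd k j) - 1

lemma prependZeros_dropZeros {l : Fin (k + m) → ℤ} (hl : l ∈ tuples (k + m) (x + 1))
    (hk : (univ.filter fun i => l i = 0).card = k) : prependZeros k (dropZeros k l) = l := by
  obtain ⟨hbd, hmono⟩ := mem_tuples.mp hl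
  have hzero := eq_zero_iff_lt_of_card hmono (fun i => (hbd i).1) hk
  ext i
  induction i using Fin.addCases with
  | left i => rw [prependZeros_castAdd, eq_comm, hzero]; simp
  | right j => rw [prependZeros_natAdd]; simp [dropZeros]

lemma dropZeros_mem_tuples {l : Fin (k + m) → ℤ} (hl : l ∈ tuples (k + m) (x + 1))
    (hk : (univ.filter fun i => l i = 0).card = k) : dropZeros k l ∈ tuples m x := by
  obtain ⟨hbd, hmono⟩ := mem_tuples.mp hl
  have hzero := eq_zero_iff_lt_of_card hmono (fun i => (hbd i).1) hk
  refine mem_tuples.mpr ⟨fun j => ?_, fun a b hab => ?_⟩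
  · have hne : l (Fin.natAdd k j) ≠ 0 := fun h => by simpa using (hzero _).mp h
    have := hbd (Fin.natAdd k j)
    simp only [dropZeros]
    push_cast at this
    omega
  · simp only [dropZeros, sub_le_sub_iff_right]
    exact hmono ((Fin.natAdd_le_natAdd_iff k).mpr hab)

lemma dropZeros_prependZeros (l : Fin m → ℤ) : dropZeros k (prependZeros k l) = l := by
  ext j
  simp [dropZeros]

end prependZeros

lemma summand_prependZeros (hq : 1 < q) (α : ℤ) {k m : ℕ} {l : Fin m → ℤ}
    (h₀ : ∀ j, 0 ≤ l j) :
    q ^ (α * ∑ i, prependZeros k l i) * weight q (prependZeros k l)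
      = gaussBinom q (k + m) k * (q ^ α) ^ m * (q ^ ((α + k) * ∑ j, l j) * weight q l) := by
  have hq₀ : q ≠ 0 := by positivity
  rw [weight_eq hq₀, weight_eq hq₀, sum_prependZeros, sum_mul_prependZeros,
    typeProd_prependZeros h₀, ← mu_mul_mu_div_mu hq k m, ← zpow_natCast (q ^ α) m,
    ← zpow_mul, ← zpow_natCast q (k * m)]
  set S := ∑ j, l j
  set E := ∑ j : Fin m, (2 * ((j : ℕ) : ℤ) + 1 - m) * l j
  have hpow : q ^ (α * (S + m)) * q ^ (E + k * S + k * m)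
      = q ^ ((k * m : ℕ) : ℤ) * q ^ (α * m) * (q ^ ((α + k) * S) * q ^ E) := by
    simp only [← zpow_add₀ hq₀]
    push_cast
    ring_nf
  have := mu_ne_zero hq m
  have := mu_ne_zero hq (k + m)
  field_simp
  linear_combination (mu q k * typeProd q l) * hpow

lemma sum_tuples_filter_card_zero (hq : 1 < q) (α : ℤ) (k m x : ℕ) :
    ∑ l ∈ (tuples (k + m) (x + 1)).filter (fun l => (univ.filter fun i => l i = 0).card = k),
        q ^ (α * ∑ i, l i) * weight q l
      = gaussBinom q (k + m) k * (q ^ α) ^ m * vol q m (α + k) x := by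
  rw [vol, mul_sum]
  refine sum_nbij' (dropZeros k) (prependZeros k) (fun l hl => ?_) (fun l hl => ?_)
    (fun l hl => ?_) (fun l _ => dropZeros_prependZeros l) (fun l hl => ?_)
  all_goals simp only [mem_filter] at hl ⊢
  · exact dropZeros_mem_tuples hl.1 hl.2
  · exact ⟨prependZeros_mem_tuples hl,
      card_prependZeros_eq_zero fun j => ((mem_tuples.mp hl).1 j).1⟩
  · exact prependZeros_dropZeros hl.1 hl.2
  · conv_lhs => rw [← prependZeros_dropZeros hl.1 hl.2]
    exact summand_prependZeros hq α
      fun j => ((mem_tuples.mp (dropZeros_mem_tuples hl.1 hl.2)).1 j).1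

lemma vol_succ (hq : 1 < q) (n : ℕ) (α : ℤ) (x : ℕ) :
    vol q n α (x + 1) = ∑ k ∈ range (n + 1),
      gaussBinom q n k * (q ^ α) ^ (n - k) * vol q (n - k) (α + k) x := by
  rw [vol, ← sum_fiberwise_of_maps_to
    (g := fun l : Fin n → ℤ => (univ.filter fun i => l i = 0).card)
    fun l _ => mem_range.mpr (Nat.lt_succ_of_le ((card_le_univ _).trans_eq (Fintype.card_fin n)))]
  refine sum_congr rfl fun k hk => ?_
  obtain ⟨m, rfl⟩ := Nat.exists_eq_add_of_le (Nat.lt_succ_iff.mp (mem_range.mp hk))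
  rw [Nat.add_sub_cancel_left]
  exact sum_tuples_filter_card_zero hq α k m x

lemma vol_zero (α : ℤ) (x : ℕ) : vol q 0 α x = 1 := by
  have : tuples 0 x = {finZeroElim} := eq_singleton_iff_unique_mem.mpr
    ⟨mem_tuples.mpr ⟨finZeroElim, fun a => a.elim0⟩, fun _ _ => Subsingleton.elim _ _⟩
  simp [vol, this, weight, typeProd, mu_zero]

def qMonomial (q : ℝ) (a b : ℕ) : ℕ → ℝ := fun x => q ^ (a * x) * (x : ℝ) ^ b

def qExpSpan (q : ℝ) : Submodule ℝ (ℕ → ℝ) :=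
  Submodule.span ℝ ((fun p : ℕ × ℕ => qMonomial q p.1 p.2) '' {p | 1 ≤ p.1})

lemma qMonomial_mem_qExpSpan {a : ℕ} (ha : 1 ≤ a) (b : ℕ) : qMonomial q a b ∈ qExpSpan q :=
  Submodule.subset_span ⟨(a, b), ha, rfl⟩

def shiftSub (ρ : ℝ) : (ℕ → ℝ) →ₗ[ℝ] ℕ → ℝ where
  toFun f x := f (x + 1) - ρ * f x
  map_add' f g := by ext x; simp only [Pi.add_apply]; ring
  map_smul' c f := by ext x; simp only [Pi.smul_apply, smul_eq_mul, RingHom.id_apply]; ring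

lemma shiftSub_apply (ρ : ℝ) (f : ℕ → ℝ) (x : ℕ) :
    shiftSub ρ f x = f (x + 1) - ρ * f x := rfl

lemma shiftSub_qMonomial (ρ : ℝ) (a b : ℕ) :
    shiftSub ρ (qMonomial q a b) =
      (q ^ a - ρ) • qMonomial q a b
        + q ^ a • ∑ j ∈ range b, (b.choose j : ℝ) • qMonomial q a j := by
  ext x
  simp only [shiftSub_apply, qMonomial, Pi.add_apply, Pi.smul_apply, Finset.sum_apply, smul_eq_mul]
  have lower : q ^ (a * (x + 1)) * ∑ j ∈ range b, (x : ℝ) ^ j * 1 ^ (b - j) * (b.choose j)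
      = q ^ a * ∑ j ∈ range b, (b.choose j : ℝ) * (q ^ (a * x) * (x : ℝ) ^ j) := by
    rw [mul_sum, mul_sum]
    refine sum_congr rfl fun j _ => ?_
    rw [one_pow, mul_add, pow_add]
    ring
  rw [Nat.cast_succ, add_pow, sum_range_succ, mul_add, lower, Nat.choose_self, mul_add a x 1,
    pow_add]
  ring

lemma mem_of_eq_smul_add {K M : Type*} [Field K] [AddCommGroup M] [Module K M] {p : Submodule K M}
    {f g h : M} {c : K} (hc : c ≠ 0)
    (hfg : f = c • g + h) (hf : f ∈ p) (hh : h ∈ p) : g ∈ p := by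
  rw [← Submodule.smul_mem_iff p hc, show c • g = f - h by rw [hfg]; abel]
  exact sub_mem hf hh

lemma qExpSpan_le_map_shiftSub (hq : 1 < q) (m : ℕ) :
    qExpSpan q ≤ (qExpSpan q).map (shiftSub (q ^ m)) := by
  refine Submodule.span_le.mpr ?_
  rintro _ ⟨⟨a, b⟩, ha, rfl⟩
  simp only [Set.mem_ofPred_eq] at ha
  induction b using Nat.strong_induction_on with
  | _ b ih =>
  have lower : ∀ c : ℕ → ℝ,
      ∑ j ∈ range b, c j • qMonomial q a j ∈ (qExpSpan q).map (shiftSub (q ^ m)) :=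
    fun c => Submodule.sum_mem _ fun j hj => Submodule.smul_mem _ _ (ih j (mem_range.mp hj))
  have image : ∀ b',
      shiftSub (q ^ m) (qMonomial q a b') ∈ (qExpSpan q).map (shiftSub (q ^ m)) :=
    fun b' => Submodule.mem_map_of_mem (qMonomial_mem_qExpSpan ha b')
  by_cases ham : a = m
  · -- resonance: `q^{mx} x^b` is the leading term of `shiftSub (q^m) (q^{mx} x^{b+1})`
    subst ham
    refine mem_of_eq_smul_add (c := q ^ a * (b + 1)) (by positivity) ?_ (image (b + 1))
      (Submodule.smul_mem _ (q ^ a) (lower fun j => ((b + 1).choose j : ℝ)))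
    rw [shiftSub_qMonomial, sum_range_succ, Nat.choose_succ_self_right, sub_self, zero_smul,
      zero_add, smul_add, mul_smul, add_comm]
    push_cast
    rfl
  · have hne : q ^ a - q ^ m ≠ 0 :=
      sub_ne_zero.mpr fun h => ham (pow_right_injective₀ (by positivity) hq.ne' h)
    exact mem_of_eq_smul_add hne (shiftSub_qMonomial _ a b) (image b)
      (Submodule.smul_mem _ _ (lower fun j => (b.choose j : ℝ)))

lemma sub_const_mem_qExpSpan_of_recurrence (hq : 1 < q) {m : ℕ} (hm : 1 ≤ m) {f g : ℕ → ℝ}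
    {r : ℝ} (hg : g - Function.const ℕ r ∈ qExpSpan q)
    (hf : ∀ x, f (x + 1) = q ^ m * f x + g x) :
    f - Function.const ℕ (r / (1 - q ^ m)) ∈ qExpSpan q := by
  have hqm : 1 - q ^ m ≠ 0 := sub_ne_zero.mpr (one_lt_pow₀ hq (by omega : m ≠ 0)).ne
  obtain ⟨h, hh, hΔh⟩ := qExpSpan_le_map_shiftSub hq m hg
  set e := f - Function.const ℕ (r / (1 - q ^ m)) - h
  have he : ∀ x, e (x + 1) = q ^ m * e x := fun x => by
    have := congrFun hΔh x
    simp only [shiftSub_apply, Pi.sub_apply, Function.const_apply] at this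
    simp only [e, Pi.sub_apply, Function.const_apply, hf]
    linear_combination -this - div_mul_cancel₀ r hqm
  have he_geom : e = e 0 • qMonomial q m 0 := by
    ext x
    induction x with
    | zero => simp [qMonomial]
    | succ x ih => simp only [he, ih, qMonomial, Pi.smul_apply, smul_eq_mul]; ring
  rw [show f - Function.const ℕ (r / (1 - q ^ m)) = h + e by simp only [e]; abel, he_geom]
  exact add_mem hh (Submodule.smul_mem _ _ (qMonomial_mem_qExpSpan hm 0))

lemma qQuasiEval_eq_linearCombination (c : (ℕ × ℕ) →₀ ℝ) (x : ℕ) :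
    qQuasiEval q c x
      = Finsupp.linearCombination ℝ (fun p : ℕ × ℕ => qMonomial q p.1 p.2) c x := by
  simp only [qQuasiEval, Finsupp.linearCombination_apply, Finsupp.sum, Finset.sum_apply,
    Pi.smul_apply, smul_eq_mul, qMonomial, mul_assoc]

lemma exists_qQuasiEval_of_sub_const_mem {f : ℕ → ℝ} {r : ℝ}
    (hf : f - Function.const ℕ r ∈ qExpSpan q) :
    ∃ c : (ℕ × ℕ) →₀ ℝ, (∀ a b : ℕ, c (a, b) ≠ 0 → 1 ≤ a ∨ (a, b) = (0, 0))
      ∧ c (0, 0) = r ∧ ∀ x, f x = qQuasiEval q c x := by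
  obtain ⟨d, hd, hdf⟩ := (Finsupp.mem_span_image_iff_linearCombination ℝ).mp hf
  refine ⟨d + Finsupp.single (0, 0) r, fun a b hab => ?_, ?_, fun x => ?_⟩
  · by_cases h : (a, b) = (0, 0)
    · exact Or.inr h
    · rw [Finsupp.add_apply, Finsupp.single_eq_of_ne h, add_zero] at hab
      exact Or.inl (hd (Finsupp.mem_support_iff.mpr hab))
  · rw [Finsupp.add_apply, Finsupp.single_eq_same,
      Finsupp.notMem_support_iff.mp fun h => absurd (hd h) (by simp), zero_add]
  · rw [qQuasiEval_eq_linearCombination, map_add, Pi.add_apply, hdf,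
      Finsupp.linearCombination_single]
    simp [qMonomial]

lemma vol_sub_const_mem_qExpSpan (hq : 1 < q) (n a : ℕ) (ha : 1 ≤ a) :
    vol q n a - Function.const ℕ (qPochhammer q (q ^ a) n)⁻¹ ∈ qExpSpan q := by
  induction n using Nat.strong_induction_on generalizing a with
  | _ n ih =>
  cases n with
  | zero =>
    convert (qExpSpan q).zero_mem
    ext x
    simp [vol_zero, qPochhammer_zero]
  | succ n =>
  have hrec : ∀ x, vol q (n + 1) a (x + 1) = q ^ (a * (n + 1)) * vol q (n + 1) a x
      + ∑ k ∈ range (n + 1), gaussBinom q (n + 1) (k + 1) * (q ^ a) ^ (n + 1 - (k + 1))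
          * vol q (n + 1 - (k + 1)) ↑(a + (k + 1)) x := fun x => by
    rw [vol_succ hq, sum_range_succ', add_comm, gaussBinom_zero_right, pow_mul]
    push_cast
    simp
  have hforcing := Submodule.sum_mem (qExpSpan q) fun k (_ : k ∈ range (n + 1)) =>
    Submodule.smul_mem _ (gaussBinom q (n + 1) (k + 1) * (q ^ a) ^ (n + 1 - (k + 1)))
      (ih (n + 1 - (k + 1)) (by omega) (a + (k + 1)) (by omega))
  have hconst : (∑ k ∈ range (n + 1), gaussBinom q (n + 1) (k + 1) * (q ^ a) ^ (n + 1 - (k + 1))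
        * (qPochhammer q (q ^ (a + (k + 1))) (n + 1 - (k + 1)))⁻¹) / (1 - q ^ (a * (n + 1)))
      = (qPochhammer q (q ^ a) (n + 1))⁻¹ := by
    have hqa : 1 < q ^ a := one_lt_pow₀ hq (by omega)
    simp only [pow_add q a, pow_mul]
    rw [sum_gaussBinom_mul_inv_qPochhammer hq (qPochhammer_ne_zero hq hqa _),
      mul_div_cancel_left₀ _ (sub_ne_zero.mpr (one_lt_pow₀ hqa (by omega)).ne)]
  rw [← hconst]
  refine sub_const_mem_qExpSpan_of_recurrence hq (Nat.mul_pos (by omega) (by omega)) ?_ hrec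
  convert hforcing using 1
  ext x
  simp [Finset.sum_apply, mul_sub]

end

/-- **Constant term of the expansion of `vol_{n,α}` for `α ≥ 1`.** For `q > 1`, `n ≥ 0` and
`α ≥ 1`, the function `x ↦ vol_{n,α}(x)` admits a `q`-quasi-polynomial expansion whose
coefficient at `q^{a x} x^b` vanishes unless `a ≥ 1` or `(a,b) = (0,0)`, and whose constant
coefficient is `c(0,0) = ∏_{i=0}^{n−1} (1 − q^{α+i})⁻¹`. -/
theorem vol_constant_coeff (q : ℝ) (hq : 1 < q) (n : ℕ) (α : ℤ) (hα : 1 ≤ α) :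
    ∃ c : (ℕ × ℕ) →₀ ℝ,
      (∀ a b : ℕ, c (a, b) ≠ 0 → 1 ≤ a ∨ (a, b) = (0, 0)) ∧
      c (0, 0) = ∏ i ∈ Finset.range n, (1 - q ^ (α + (i : ℤ)))⁻¹ ∧
      ∀ x : ℕ, 1 ≤ x → vol q n α x = qQuasiEval q c x := by
  lift α to ℕ using by omega
  obtain ⟨c, hsupp, hconst, hexp⟩ := exists_qQuasiEval_of_sub_const_mem
    (vol_sub_const_mem_qExpSpan hq n α (by omega))
  refine ⟨c, hsupp, hconst.trans ?_, fun x _ => hexp x⟩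
  rw [qPochhammer, ← prod_inv_distrib]
  refine prod_congr rfl fun i _ => ?_
  rw [zpow_add₀ (by positivity), zpow_natCast, zpow_natCast]
end

section
/- Fix a real number q > 1. For all integers n ≥ 0, α, and x ≥ 0, the functional equation vol_{n,α}(x) = q^{n·α·x} · vol_{n,−α}(x) holds. -/
open Finset

/-!
Reflecting a tuple, `λ ↦ (x - λ_n, …, x - λ_1)`, is an involution of the weakly increasing tuples
in `[0, x]^n`. It preserves the type (reversed) and the factor `∏_{i<j} q^{λ_j - λ_i}`, hence the
weight, while it sends `λ_1 + ⋯ + λ_n` to `n x - (λ_1 + ⋯ + λ_n)`.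
-/

open Finset

namespace Vol

variable {n : ℕ}

def reflect (x : ℤ) (l : Fin n → ℤ) : Fin n → ℤ :=
  fun i => x - l i.rev

theorem reflect_reflect (x : ℤ) (l : Fin n → ℤ) : reflect x (reflect x l) = l := by
  funext i
  simp [reflect]

theorem sum_reflect (x : ℤ) (l : Fin n → ℤ) : ∑ i, reflect x l i = n * x - ∑ i, l i := by
  have hrev : ∑ i : Fin n, l i.rev = ∑ i, l i := Fintype.sum_equiv Fin.revPerm _ _ fun _ => rfl
  simp [reflect, sum_sub_distrib, hrev]

theorem mem_tuples {x : ℕ} {l : Fin n → ℤ} :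
    l ∈ tuples n x ↔ (∀ i, 0 ≤ l i ∧ l i ≤ x) ∧ Monotone l := by
  classical
  simp [tuples, Fintype.mem_piFinset]

theorem reflect_mem_tuples {x : ℕ} {l : Fin n → ℤ} (h : l ∈ tuples n x) :
    reflect x l ∈ tuples n x := by
  rw [mem_tuples] at h ⊢
  obtain ⟨hbound, hmono⟩ := h
  refine ⟨fun i => ?_, fun i j hij => ?_⟩
  · have := hbound i.rev
    simp only [reflect]
    omega
  · have := hmono (Fin.rev_le_rev.mpr hij)
    simp only [reflect]
    omega

variable (q : ℝ)

theorem typeProd_comp_perm (l : Fin n → ℤ) (σ : Equiv.Perm (Fin n)) :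
    typeProd q (l ∘ σ) = typeProd q l := by
  classical
  have himage : image (l ∘ σ) univ = image l univ := by
    rw [← image_image, image_univ_equiv]
  unfold typeProd
  rw [himage]
  refine prod_congr rfl fun v _ => congrArg (mu q) ?_
  simpa using card_equiv σ (by simp)

theorem typeProd_injective_comp (l : Fin n → ℤ) {f : ℤ → ℤ} (hf : Function.Injective f) :
    typeProd q (f ∘ l) = typeProd q l := by
  classical
  unfold typeProd
  rw [← image_image, prod_image fun a _ b _ h => hf h]
  simp only [Function.comp_apply, hf.eq_iff]

theorem typeProd_reflect (x : ℤ) (l : Fin n → ℤ) : typeProd q (reflect x l) = typeProd q l := by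
  have hinj : Function.Injective fun v : ℤ => x - v := sub_right_injective
  calc typeProd q (reflect x l) = typeProd q ((fun v => x - v) ∘ (l ∘ Fin.revPerm)) := rfl
    _ = typeProd q l := by rw [typeProd_injective_comp q _ hinj, typeProd_comp_perm]

theorem prod_pow_sub_reflect (x : ℤ) (l : Fin n → ℤ) :
    ∏ p ∈ univ.filter (fun p : Fin n × Fin n => p.1 < p.2), q ^ (reflect x l p.2 - reflect x l p.1) =
      ∏ p ∈ univ.filter (fun p : Fin n × Fin n => p.1 < p.2), q ^ (l p.2 - l p.1) := by
  refine prod_nbij' (fun p => (p.2.rev, p.1.rev)) (fun p => (p.2.rev, p.1.rev))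
    ?_ ?_ (fun p _ => by simp) (fun p _ => by simp) fun p _ => ?_
  · simp
  · simp
  · simp only [reflect]
    ring_nf

theorem weight_reflect (x : ℤ) (l : Fin n → ℤ) : weight q (reflect x l) = weight q l := by
  rw [weight, weight, typeProd_reflect, prod_pow_sub_reflect]

end Vol

open Vol in
/-- **Functional equation for `vol_{n,α}`.** For `q > 1` and all integers `n ≥ 0`, `α`, and
`x ≥ 0`: `vol_{n,α}(x) = q^{nαx} · vol_{n,−α}(x)`. -/
theorem vol_functional_equation (q : ℝ) (hq : 1 < q) (n : ℕ) (α : ℤ) (x : ℕ) :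
    vol q n α x = q ^ ((n : ℤ) * α * (x : ℤ)) * vol q n (-α) x := by
  have hq0 : q ≠ 0 := by positivity
  rw [vol, vol, mul_sum]
  refine sum_nbij' (reflect x) (reflect x) (fun l hl => reflect_mem_tuples hl)
    (fun l hl => reflect_mem_tuples hl) (fun l _ => reflect_reflect _ l)
    (fun l _ => reflect_reflect _ l) fun l _ => ?_
  rw [weight_reflect, sum_reflect, ← mul_assoc, ← zpow_add₀ hq0]
  congr 2
  ring
end
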